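/- Let 0 < β < 1, p(n) = n^{−β}, α = min(1/2, β/(2−β)), and let k ≥ 1 be an integer. For each n fix a total order on the C(n,2) potential edges of a graph on {1,…,n}. Then there exists B₀ > 0 such that for every B ≥ B₀, lim_{n→∞} P( n_{ℓ−1}(G) ≤ B·E(X_E)^{ℓ−α} for all 2 ≤ ℓ ≤ k+1 ) = 1 for the Erdős–Rényi random graph G ∈ G(n,p(n)). -/

import Mathlib

open SimpleGraph Finset Filter

namespace SEP

/-- The vector `e_i - e_j` in `ℝ^n`. -/
def eVec {n : ℕ} (i j : Fin n) : Fin n → ℝ :=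
  fun t => (if t = i then 1 else 0) - (if t = j then 1 else 0)

/-- The symmetric edge polytope of a graph on `Fin n`. -/
def symEdgePolytope {n : ℕ} (G : SimpleGraph (Fin n)) : Set (Fin n → ℝ) :=
  convexHull ℝ {x | ∃ i j, G.Adj i j ∧ x = eVec i j}

/-- Both darts `a` and `b` are arcs of a common directed cycle of length `m` of `G`. -/
def dartsInCycle {V : Type*} (G : SimpleGraph V) (a b : G.Dart) (m : ℕ) : Prop :=
  ∃ (u : V) (w : G.Walk u u), w.IsCycle ∧ w.length = m ∧ a ∈ w.darts ∧ b ∈ w.darts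

/-- `F` is a face of the polytope `P`: the set of maximizers of some linear functional. -/
def IsFaceOfPolytope {n : ℕ} (P F : Set (Fin n → ℝ)) : Prop :=
  ∃ a : Fin n → ℝ,
    F = {x | x ∈ P ∧ ∀ y ∈ P, ∑ t, a t * y t ≤ ∑ t, a t * x t}

/-- Dimension of (the affine span of) a subset of `ℝ^n`. -/
noncomputable def polyDim {n : ℕ} (s : Set (Fin n → ℝ)) : ℕ :=
  Module.finrank ℝ (vectorSpan ℝ s)

/-- `v` is a vertex of the polytope `P`. -/
def IsVertexOfPolytope {n : ℕ} (P : Set (Fin n → ℝ)) (v : Fin n → ℝ) : Prop :=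
  IsFaceOfPolytope P {v}

/-- `F` is an edge (a 1-dimensional face) of the polytope `P`. -/
def IsEdgeOfPolytope {n : ℕ} (P F : Set (Fin n → ℝ)) : Prop :=
  IsFaceOfPolytope P F ∧ polyDim F = 1

/-- A polytope is simple if every vertex lies on exactly `dim P` edges. -/
def IsSimplePolytope {n : ℕ} (P : Set (Fin n → ℝ)) : Prop :=
  ∀ v, IsVertexOfPolytope P v →
    Set.ncard {F : Set (Fin n → ℝ) | IsEdgeOfPolytope P F ∧ v ∈ F} = polyDim P

/-- Two disjoint edges, on four vertices. -/
def twoDisjointEdges : SimpleGraph (Fin 4) :=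
  SimpleGraph.fromEdgeSet {s(0, 1), s(2, 3)}

/-- The cyclomatic number `|E| - |V| + c` of a graph, as an integer. -/
noncomputable def cyc {V : Type*} (G : SimpleGraph V) : ℤ :=
  (G.edgeSet.ncard : ℤ) + Nat.card G.ConnectedComponent - Nat.card V

/-- A graph is 2-connected: connected, with at least 3 vertices, and deleting any
single vertex leaves it connected. -/
def TwoConnected {V : Type*} (G : SimpleGraph V) : Prop :=
  G.Connected ∧ 3 ≤ Nat.card V ∧ ∀ v : V, (G.induce {u | u ≠ v}).Connected

/-- The subgraph `H` consists of a single edge of `G`. -/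
def IsSingleEdge {V : Type*} (G : SimpleGraph V) (H : G.Subgraph) : Prop :=
  ∃ (u v : V) (h : G.Adj u v), H = G.subgraphOfAdj h

/-- `H` is a 2-connected component (block) of `G`: an inclusion-maximal subgraph that is
2-connected or a single edge. -/
def IsBlock {V : Type*} (G : SimpleGraph V) (H : G.Subgraph) : Prop :=
  (TwoConnected H.coe ∨ IsSingleEdge G H) ∧
    ∀ H' : G.Subgraph, H ≤ H' → (TwoConnected H'.coe ∨ IsSingleEdge G H') → H' = H

/-- A pair of darts (oriented edges) of `G`, with distinct underlying edges, is *bad*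
with respect to the order `elt` on edges. -/
def BadPair {V : Type*} (G : SimpleGraph V) (elt : Sym2 V → Sym2 V → Prop)
    (a b : G.Dart) : Prop :=
  a.edge ≠ b.edge ∧
    (dartsInCycle G a b 3 ∨
      ∃ (u : V) (w : G.Walk u u), w.IsCycle ∧ w.length = 4 ∧ a ∈ w.darts ∧ b ∈ w.darts ∧
        (∃ e ∈ w.edges, elt e a.edge) ∧ (∃ e ∈ w.edges, elt e b.edge))

/-- `n₁(G, <)`: the number of (unordered) bad pairs of oriented edges. -/
noncomputable def n1 {V : Type*} (G : SimpleGraph V) (elt : Sym2 V → Sym2 V → Prop) : ℕ :=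
  Set.ncard {z : Sym2 G.Dart | ∃ a b, BadPair G elt a b ∧ z = s(a, b)}

/-- `γ₂(G, <) = 2 cy(G)(cy(G)+2) - n₁(G, <)`. -/
noncomputable def gammaTwo {V : Type*} (G : SimpleGraph V)
    (elt : Sym2 V → Sym2 V → Prop) : ℤ :=
  2 * cyc G * (cyc G + 2) - (n1 G elt : ℤ)

/-- Restriction of an order on `Sym2 V` to `Sym2 s` for `s : Set V`. -/
def restrictOrd {V : Type*} (elt : Sym2 V → Sym2 V → Prop) (s : Set V) :
    Sym2 s → Sym2 s → Prop :=
  fun e₁ e₂ => elt (e₁.map Subtype.val) (e₂.map Subtype.val)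

/-- The graph `G_n` on `Fin n`: vertices `0` and `1` are adjacent to everything. -/
def GnGraph (n : ℕ) : SimpleGraph (Fin n) :=
  SimpleGraph.fromRel (fun a _ => a.val < 2)

/-- The complete bipartite graph `K_{2, n-2}` on `Fin n`, with parts `{0,1}` and the rest. -/
def K2Graph (n : ℕ) : SimpleGraph (Fin n) :=
  SimpleGraph.fromRel (fun a b => a.val < 2 ∧ 2 ≤ b.val)

/-- A set `S` of darts of `G` is a face of the triangulation `Δ_<` of `∂P_G`. -/
def IsFace {V : Type*} (G : SimpleGraph V) (elt : Sym2 V → Sym2 V → Prop)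
    (S : Set G.Dart) : Prop :=
  (¬ ∃ d ∈ S, d.symm ∈ S) ∧
    ∀ ℓ : ℕ, 2 ≤ ℓ → ∀ (u : V) (w : G.Walk u u), w.IsCycle →
      (w.length = 2 * ℓ - 1 → Set.ncard {d ∈ S | d ∈ w.darts} < ℓ) ∧
      (w.length = 2 * ℓ →
        Set.ncard {d ∈ S | d ∈ w.darts ∧ ∃ e ∈ w.edges, elt e d.edge} < ℓ)

/-- The face complex `Δ_<` of `(G, <)`. -/
def faceCx {V : Type*} (G : SimpleGraph V) (elt : Sym2 V → Sym2 V → Prop) :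
    Set (Set G.Dart) :=
  {S | IsFace G elt S}

/-- The join of two simplicial complexes (given as families of faces on disjoint
vertex types). -/
def joinCx {A B : Type*} (F : Set (Set A)) (H : Set (Set B)) : Set (Set (A ⊕ B)) :=
  {S | ∃ F₁ ∈ F, ∃ H₁ ∈ H, S = Sum.inl '' F₁ ∪ Sum.inr '' H₁}

/-- The complex consisting of two disjoint vertices. -/
def twoPtCx : Set (Set (Fin 2)) :=
  {S | S = ∅ ∨ S = {0} ∨ S = {1}}

/-- Contraction of the edge `{v, w}` of a simplicial complex; `v` is identified with `w`. -/
def contractCx {A : Type*} (F : Set (Set A)) (v w : A) : Set (Set A) :=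
  {S | (S ∈ F ∧ v ∉ S) ∨ ∃ H ∈ F, v ∈ H ∧ S = (H \ {v}) ∪ {w}}

/-- Isomorphism of simplicial complexes: a bijection of vertex sets inducing a bijection
of faces. -/
def CxIso {A B : Type*} (F : Set (Set A)) (H : Set (Set B)) : Prop :=
  ∃ φ : A → B, Set.BijOn φ (⋃₀ F) (⋃₀ H) ∧
    (∀ S ∈ F, φ '' S ∈ H) ∧ (∀ T ∈ H, ∃ S ∈ F, φ '' S = T)

/-! ### Erdős–Rényi random graphs -/

/-- The probability weight of a fixed graph `G` in the Erdős–Rényi model `G(n,p)`. -/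
noncomputable def graphWeight (n : ℕ) (p : ℝ) (G : SimpleGraph (Fin n)) : ℝ :=
  p ^ G.edgeSet.ncard * (1 - p) ^ (n.choose 2 - G.edgeSet.ncard)

/-- The probability of an event `A` in the Erdős–Rényi model `G(n,p)`. -/
noncomputable def erProb (n : ℕ) (p : ℝ) (A : Set (SimpleGraph (Fin n))) : ℝ :=
  ∑ G : SimpleGraph (Fin n), A.indicator (graphWeight n p) G

/-- The expectation of a random variable in the Erdős–Rényi model `G(n,p)`. -/
noncomputable def erExp (n : ℕ) (p : ℝ) (X : SimpleGraph (Fin n) → ℝ) : ℝ :=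
  ∑ G : SimpleGraph (Fin n), graphWeight n p G * X G

/-- The variance of a random variable in the Erdős–Rényi model `G(n,p)`. -/
noncomputable def erVar (n : ℕ) (p : ℝ) (X : SimpleGraph (Fin n) → ℝ) : ℝ :=
  erExp n p (fun G => (X G - erExp n p X) ^ 2)

/-- The number of cycles of `G` with exactly `k` vertices, counted via their edge sets. -/
noncomputable def numCycles {V : Type*} (G : SimpleGraph V) (k : ℕ) : ℕ :=
  Set.ncard {s : Set (Sym2 V) |
    ∃ (u : V) (w : G.Walk u u), w.IsCycle ∧ w.length = k ∧ s = {e | e ∈ w.edges}}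

/-- `E(X_k) = C(n,k)·((k−1)!/2)·p^k`, the expected number of `k`-cycles. -/
noncomputable def expCycles (n : ℕ) (p : ℝ) (k : ℕ) : ℝ :=
  (n.choose k : ℝ) * ((Nat.factorial (k - 1) : ℝ) / 2) * p ^ k

/-- `E(X_E) = C(n,2)·p`, the expected number of edges. -/
noncomputable def expEdges (n : ℕ) (p : ℝ) : ℝ :=
  (n.choose 2 : ℝ) * p

/-- `n_{k-1}(G)`: the number of `k`-element non-faces of `Δ_<` containing no antipodal
pair. -/
noncomputable def numNonFaces {V : Type*} (G : SimpleGraph V)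
    (elt : Sym2 V → Sym2 V → Prop) (k : ℕ) : ℕ :=
  Set.ncard {S : Set G.Dart |
    S.ncard = k ∧ (¬ ∃ d ∈ S, d.symm ∈ S) ∧ ¬ IsFace G elt S}

/-- `f_{k-1}(G)`: the number of `k`-element faces of `Δ_<`. -/
noncomputable def numFaces {V : Type*} (G : SimpleGraph V)
    (elt : Sym2 V → Sym2 V → Prop) (k : ℕ) : ℕ :=
  Set.ncard {S : Set G.Dart | S.ncard = k ∧ IsFace G elt S}

/-- The generalized binomial coefficient `binom(x, ℓ)` for real `x`. -/
noncomputable def realChoose (x : ℝ) (ℓ : ℕ) : ℝ :=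
  (∏ i ∈ Finset.range ℓ, (x - i)) / (Nat.factorial ℓ)

/-- The recursively defined γ-numbers `γ_ℓ(G)`:
`γ_0 = 1` and
`γ_ℓ = f_{ℓ−1} − [t^{n−1−ℓ}] ∑_{i<ℓ} γ_i (t+1)^i (t+2)^{n−1−2i}`. -/
noncomputable def gammaRG (n : ℕ) (G : SimpleGraph (Fin n))
    (elt : Sym2 (Fin n) → Sym2 (Fin n) → Prop) : ℕ → ℤ := fun ℓ =>
  Nat.strongRecOn ℓ (fun ℓ ih =>
    if ℓ = 0 then (1 : ℤ)
    else
      (numFaces G elt ℓ : ℤ) -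
        Polynomial.coeff
          (∑ i ∈ (Finset.range ℓ).attach,
            Polynomial.C (ih i.1 (Finset.mem_range.mp i.2)) *
              ((Polynomial.X + 1) ^ (i.1 : ℕ) *
                (Polynomial.X + 2) ^ (n - 1 - 2 * i.1) : Polynomial ℤ))
          (n - 1 - ℓ))


theorem edges_getElem {V : Type*} {G : SimpleGraph V} {u v : V} (p : G.Walk u v) (j : ℕ)
    (hj : j < p.length) :
    p.edges[j]'(by rwa [SimpleGraph.Walk.length_edges]) = s(p.getVert j, p.getVert (j+1)) := by
  induction p generalizing j with
  | nil => simp at hj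
  | cons h q ih =>
    cases j with
    | zero => simp [SimpleGraph.Walk.getVert_zero, SimpleGraph.Walk.getVert_cons_succ]
    | succ j =>
      simp only [SimpleGraph.Walk.edges_cons, List.getElem_cons_succ,
        SimpleGraph.Walk.getVert_cons_succ]
      exact ih j (by simpa [SimpleGraph.Walk.length_cons, Nat.succ_lt_succ_iff] using hj)

/-- Witness type. -/
abbrev WT (n ℓ m : ℕ) := (Fin m → Fin n) × (Fin ℓ → ((Fin m × Bool) ⊕ (Fin n × Fin n)))

def incr {m : ℕ} (j : Fin m) : Fin m := ⟨(j.val + 1) % m, Nat.mod_lt _ j.pos⟩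

def cycE {n m : ℕ} (c : Fin m → Fin n) (j : Fin m) : Sym2 (Fin n) := s(c j, c (incr j))

def decodePair {n m : ℕ} (c : Fin m → Fin n) :
    (Fin m × Bool) ⊕ (Fin n × Fin n) → Fin n × Fin n
  | .inl jb => if jb.2 then (c jb.1, c (incr jb.1)) else (c (incr jb.1), c jb.1)
  | .inr pr => pr

def entryEdge {n m : ℕ} (c : Fin m → Fin n) (a : (Fin m × Bool) ⊕ (Fin n × Fin n)) :
    Sym2 (Fin n) := s((decodePair c a).1, (decodePair c a).2)

lemma entryEdge_inl {n m : ℕ} (c : Fin m → Fin n) (j : Fin m) (b : Bool) :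
    entryEdge c (.inl (j, b)) = cycE c j := by
  cases b <;> simp [entryEdge, decodePair, cycE, Sym2.eq_swap]

def tL {n ℓ m : ℕ} (w : WT n ℓ m) : ℕ := #(univ.filter fun i => (w.2 i).isLeft)

noncomputable def realizedW {n ℓ m : ℕ} (w : WT n ℓ m) : Finset (Sym2 (Fin n)) :=
  univ.image (cycE w.1) ∪ univ.image (fun i => entryEdge w.1 (w.2 i))

def GoodW {n ℓ m : ℕ} (w : WT n ℓ m) : Prop :=
  Function.Injective (cycE w.1) ∧
  m ≤ 2 * tL w ∧
  (∀ j, w.1 j ≠ w.1 (incr j)) ∧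
  (∀ i pr, w.2 i = .inr pr → pr.1 ≠ pr.2 ∧ s(pr.1, pr.2) ∉ Set.range (cycE w.1)) ∧
  (∀ i i' pr pr', w.2 i = .inr pr → w.2 i' = .inr pr' →
    s(pr.1, pr.2) = s(pr'.1, pr'.2) → i = i')

lemma tL_le {n ℓ m : ℕ} (w : WT n ℓ m) : tL w ≤ ℓ :=
  le_trans (Finset.card_filter_le _ _) (by simp)

/-- Card lower bound for realized edges of a good witness. -/
lemma realizedW_card {n ℓ m : ℕ} (w : WT n ℓ m) (hw : GoodW w) :
    m + (ℓ - tL w) ≤ (realizedW w).card := by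
  classical
  obtain ⟨hinj, -, -, hr, hrinj⟩ := hw
  set offF : Finset (Sym2 (Fin n)) :=
    (univ.filter fun i => (w.2 i).isRight).image (fun i => entryEdge w.1 (w.2 i)) with hoffF
  have hsub : univ.image (cycE w.1) ∪ offF ⊆ realizedW w := by
    apply Finset.union_subset (Finset.subset_union_left)
    exact (Finset.image_subset_image (Finset.subset_univ _)).trans Finset.subset_union_right
  refine le_trans ?_ (Finset.card_le_card hsub)
  have hdisj : Disjoint (univ.image (cycE w.1)) offF := by
    rw [Finset.disjoint_right]
    intro e he hce
    simp only [hoffF, Finset.mem_image, Finset.mem_filter, Finset.mem_univ, true_and] at he hce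
    obtain ⟨i, hiR, hie⟩ := he
    obtain ⟨j, hj⟩ := hce
    obtain ⟨pr, hpr⟩ := Sum.isRight_iff.mp hiR
    have : entryEdge w.1 (w.2 i) = s(pr.1, pr.2) := by rw [hpr]; rfl
    exact (hr i pr hpr).2 ⟨j, by rw [hj, ← hie, this]⟩
  rw [Finset.card_union_of_disjoint hdisj]
  have h1 : (univ.image (cycE w.1)).card = m := by
    rw [Finset.card_image_of_injective _ hinj, Finset.card_univ, Fintype.card_fin]
  have h2 : ℓ - tL w ≤ offF.card := by
    have hcard : #(univ.filter fun i => (w.2 i).isRight) = ℓ - tL w := by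
      have h0 := Finset.card_filter_add_card_filter_not (s := univ)
        (p := fun i => (w.2 i).isLeft)
      simp only [Finset.card_univ, Fintype.card_fin] at h0
      have heq : (univ.filter fun i => ¬ ((w.2 i).isLeft = true)) =
          (univ.filter fun i => (w.2 i).isRight) := by
        apply Finset.filter_congr; intro i _
        cases hsum : w.2 i <;> simp
      rw [heq] at h0
      have htl : tL w = #(univ.filter fun i => (w.2 i).isLeft) := rfl
      omega
    rw [← hcard]
    apply Finset.card_le_card_of_injOn _ (fun i hi => Finset.mem_image_of_mem _ hi)
    intro i hi i' hi' hee
    simp only [Finset.mem_coe, Finset.mem_filter, Finset.mem_univ, true_and] at hi hi'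
    obtain ⟨pr, hpr⟩ := Sum.isRight_iff.mp hi
    obtain ⟨pr', hpr'⟩ := Sum.isRight_iff.mp hi'
    refine hrinj i i' pr pr' hpr hpr' ?_
    have e1 : entryEdge w.1 (w.2 i) = s(pr.1, pr.2) := by rw [hpr]; rfl
    have e2 : entryEdge w.1 (w.2 i') = s(pr'.1, pr'.2) := by rw [hpr']; rfl
    have hee' : entryEdge w.1 (w.2 i) = entryEdge w.1 (w.2 i') := hee
    rw [← e1, ← e2, hee']
  omega



theorem not_isFace {V : Type*} (G : SimpleGraph V) (elt) (S : Set G.Dart)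
    (hanti : ¬ ∃ d ∈ S, d.symm ∈ S) (h : ¬ IsFace G elt S) :
    ∃ ℓ₀, 2 ≤ ℓ₀ ∧ ∃ (u : V) (w : G.Walk u u), w.IsCycle ∧
      ((w.length = 2 * ℓ₀ - 1 ∧ ℓ₀ ≤ Set.ncard {d ∈ S | d ∈ w.darts}) ∨
       (w.length = 2 * ℓ₀ ∧ ℓ₀ ≤ Set.ncard {d ∈ S | d ∈ w.darts ∧ ∃ e ∈ w.edges, elt e d.edge})) := by
  rw [IsFace] at h
  push_neg at h hanti
  obtain ⟨ℓ₀, h2, u, w, hcyc, hbad⟩ := h hanti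
  refine ⟨ℓ₀, h2, u, w, hcyc, ?_⟩
  by_cases hc : w.length = 2 * ℓ₀ - 1 → Set.ncard {d ∈ S | d ∈ w.darts} < ℓ₀
  · right; exact hbad hc
  · left; push_neg at hc; exact hc

instance dartFinite {n : ℕ} (G : SimpleGraph (Fin n)) : Finite G.Dart :=
  Finite.of_injective (fun d => d.toProd) (fun a b h => SimpleGraph.Dart.ext a b h)

theorem exists_witness {n : ℕ} (G : SimpleGraph (Fin n)) (elt : Sym2 (Fin n) → Sym2 (Fin n) → Prop)
    {ℓ : ℕ} (hl2 : 2 ≤ ℓ) (S : Set G.Dart)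
    (hcard : S.ncard = ℓ) (hanti : ¬ ∃ d ∈ S, d.symm ∈ S) (hnf : ¬ IsFace G elt S) :
    ∃ m ∈ Finset.Icc 3 (2*ℓ), ∃ w : WT n ℓ m, GoodW w ∧ ↑(realizedW w) ⊆ G.edgeSet ∧
      (∀ d : G.Dart, d ∈ S ↔ ∃ i, d.toProd = decodePair w.1 (w.2 i)) := by
  classical
  obtain ⟨ℓ₀, hℓ₀2, u, w, hcyc, hcase⟩ := not_isFace G elt S hanti hnf
  set m := w.length with hmdef
  have hm3 : 3 ≤ m := hcyc.three_le_length
  have hfin : S.Finite := Set.toFinite S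
  -- unified facts from the two cases
  have hA : ℓ₀ ≤ Set.ncard {d ∈ S | d ∈ w.darts} := by
    rcases hcase with ⟨-, h⟩ | ⟨-, h⟩
    · exact h
    · refine h.trans (Set.ncard_le_ncard ?_ (hfin.subset (fun d hd => hd.1)))
      exact fun d hd => ⟨hd.1, hd.2.1⟩
  have hm2ℓ₀ : m ≤ 2 * ℓ₀ := by
    rcases hcase with ⟨h, -⟩ | ⟨h, -⟩ <;> omega
  have hℓ₀ℓ : ℓ₀ ≤ ℓ := by
    refine hA.trans ?_
    rw [← hcard]
    exact Set.ncard_le_ncard (fun d hd => hd.1) hfin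
  -- the cycle vertex function
  set c : Fin m → Fin n := fun j => w.getVert j with hc
  have hlenE : w.edges.length = m := w.length_edges
  have hedge : ∀ j : Fin m, cycE c j = w.edges[j.val]'(by rw [hlenE]; exact j.2) := by
    intro j
    rw [edges_getElem w j.val j.2]
    have h1 : c j = w.getVert j.val := rfl
    by_cases hj : j.val + 1 < m
    · have hv : (incr j).val = j.val + 1 := by simp [incr, Nat.mod_eq_of_lt hj]
      have h2 : c (incr j) = w.getVert (j.val + 1) := by rw [hc]; simp [hv]
      simp [cycE, h1, h2]
    · have hjm : j.val + 1 = m := by omega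
      have : (incr j).val = 0 := by simp [incr, hjm]
      have h2 : c (incr j) = w.getVert 0 := by rw [hc]; simp [this]
      have h3 : w.getVert (j.val + 1) = u := by rw [hjm, hmdef]; exact w.getVert_length
      have h4 : w.getVert 0 = u := w.getVert_zero
      simp [cycE, h1, h2, h3, h4]
  have hmemcycE : ∀ j : Fin m, cycE c j ∈ w.edges := by
    intro j; rw [hedge j]; exact List.getElem_mem _
  have hinjc : Function.Injective (cycE c) := by
    intro j j' hjj
    rw [hedge j, hedge j'] at hjj
    have := (hcyc.isCircuit.isTrail.edges_nodup.getElem_inj_iff).mp hjj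
    exact Fin.ext this
  have hnd : ∀ j : Fin m, c j ≠ c (incr j) := by
    intro j hne
    have h1 : cycE c j ∈ G.edgeSet := w.edges_subset_edgeSet (hmemcycE j)
    have h2 := G.not_isDiag_of_mem_edgeSet h1
    exact h2 (by rw [cycE, ← hne]; exact Sym2.mk_isDiag_iff.mpr rfl)
  have hmemE : ∀ e ∈ w.edges, ∃ j : Fin m, cycE c j = e := by
    intro e he
    obtain ⟨j, hj, hje⟩ := List.getElem_of_mem he
    exact ⟨⟨j, by rwa [hlenE] at hj⟩, by rw [hedge]; exact hje⟩
  -- enumeration of S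
  have hStf : hfin.toFinset.card = ℓ := by rw [← Set.ncard_eq_toFinset_card _ hfin, hcard]
  set en0 := hfin.toFinset.equivFinOfCardEq hStf with hen0
  set en : Fin ℓ → G.Dart := fun i => (en0.symm i).val with hen
  have hen_mem : ∀ i, en i ∈ S := fun i => hfin.mem_toFinset.mp (en0.symm i).2
  have hen_inj : Function.Injective en := by
    intro i i' hii
    have := Subtype.ext (p := fun x => x ∈ hfin.toFinset) hii
    exact en0.symm.injective this
  have hen_surj : ∀ d ∈ S, ∃ i, en i = d := by
    intro d hd
    exact ⟨en0 ⟨d, hfin.mem_toFinset.mpr hd⟩, by simp [hen]⟩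
  -- the encoding function
  set f : Fin ℓ → ((Fin m × Bool) ⊕ (Fin n × Fin n)) := fun i =>
    if h : ∃ j : Fin m, (en i).edge = cycE c j then
      Sum.inl (h.choose, decide ((en i).toProd.1 = c h.choose))
    else Sum.inr (en i).toProd with hf
  have hleft : ∀ i, (f i).isLeft = true ↔ ∃ j : Fin m, (en i).edge = cycE c j := by
    intro i
    by_cases h : ∃ j : Fin m, (en i).edge = cycE c j <;> simp [hf, h]
  have hdecode : ∀ i, decodePair c (f i) = (en i).toProd := by
    intro i
    by_cases h : ∃ j : Fin m, (en i).edge = cycE c j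
    · have hspec : (en i).edge = cycE c h.choose := h.choose_spec
      set j := h.choose with hj
      have hed : s((en i).toProd.1, (en i).toProd.2) = s(c j, c (incr j)) := hspec
      rw [Sym2.eq_iff] at hed
      rcases hed with ⟨h1, h2⟩ | ⟨h1, h2⟩
      · have hb : decide ((en i).toProd.1 = c j) = true := by simp [h1]
        simp only [hf, dif_pos h, decodePair, ← hj, hb, if_pos]
        exact Prod.ext h1.symm h2.symm
      · have hb : decide ((en i).toProd.1 = c j) = false := by
          simp only [decide_eq_false_iff_not]
          rw [h1]; exact (hnd j).symm
        simp only [hf, dif_pos h, decodePair, ← hj, hb]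
        simp only [Bool.false_eq_true, if_false]
        exact Prod.ext h1.symm h2.symm
    · simp [hf, dif_neg h, decodePair]
  refine ⟨m, Finset.mem_Icc.mpr ⟨hm3, by omega⟩, (c, f), ⟨hinjc, ?_, hnd, ?_, ?_⟩, ?_, ?_⟩
  · -- m ≤ 2 * tL
    have hbnd : ℓ₀ ≤ tL ((c, f) : WT n ℓ m) := by
      have : Set.ncard {d ∈ S | d ∈ w.darts} ≤
          Set.ncard (↑(univ.filter fun i => ((f i).isLeft = true)) : Set (Fin ℓ)) := by
        refine Set.ncard_le_ncard_of_injOn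
          (fun d => if hd : d ∈ hfin.toFinset then en0 ⟨d, hd⟩ else ⟨0, by omega⟩) ?_ ?_
          (Set.toFinite _)
        · rintro d ⟨hdS, hdw⟩
          have hd : d ∈ hfin.toFinset := hfin.mem_toFinset.mpr hdS
          simp only [dif_pos hd, Finset.coe_filter, Set.mem_setOf_eq, Finset.mem_univ, true_and]
          rw [hleft]
          have hde : d.edge ∈ w.edges := by
            exact List.mem_map_of_mem (f := SimpleGraph.Dart.edge) hdw
          obtain ⟨j, hj⟩ := hmemE d.edge hde
          have : en (en0 ⟨d, hd⟩) = d := by simp [hen]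
          exact ⟨j, by rw [this, ← hj]⟩
        · rintro d ⟨hdS, -⟩ d' ⟨hdS', -⟩ hdd
          have hd : d ∈ hfin.toFinset := hfin.mem_toFinset.mpr hdS
          have hd' : d' ∈ hfin.toFinset := hfin.mem_toFinset.mpr hdS'
          simp only [dif_pos hd, dif_pos hd'] at hdd
          have := en0.injective hdd
          exact Subtype.mk_eq_mk.mp this
      rw [Set.ncard_coe_finset] at this
      exact le_trans hA this
    simp only [tL] at hbnd ⊢
    omega
  · -- inr entries
    intro i pr hpr
    have hnoj : ¬ ∃ j : Fin m, (en i).edge = cycE c j := by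
      intro hj
      simp only [hf, dif_pos hj] at hpr
      exact absurd hpr Sum.inl_ne_inr
    have hpr' : pr = (en i).toProd := by
      simp only [hf, dif_neg hnoj] at hpr
      exact (Sum.inr.inj hpr).symm
    constructor
    · rw [hpr']; exact (en i).adj.ne
    · rintro ⟨j, hj⟩
      refine hnoj ⟨j, ?_⟩
      have hj' : cycE c j = s(pr.1, pr.2) := hj
      rw [hj', hpr']; rfl
  · -- inr injectivity
    intro i i' pr pr' hpr hpr' hee
    have h1 : pr = (en i).toProd := by
      by_cases h : ∃ j : Fin m, (en i).edge = cycE c j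
      · simp only [hf, dif_pos h] at hpr; exact absurd hpr Sum.inl_ne_inr
      · simp only [hf, dif_neg h] at hpr; exact (Sum.inr.inj hpr).symm
    have h2 : pr' = (en i').toProd := by
      by_cases h : ∃ j : Fin m, (en i').edge = cycE c j
      · simp only [hf, dif_pos h] at hpr'; exact absurd hpr' Sum.inl_ne_inr
      · simp only [hf, dif_neg h] at hpr'; exact (Sum.inr.inj hpr').symm
    have hedge_eq : (en i).edge = (en i').edge := by
      rw [h1, h2] at hee; exact hee
    rcases (SimpleGraph.dart_edge_eq_iff _ _).mp hedge_eq with heq | heq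
    · exact hen_inj heq
    · exfalso
      refine hanti ⟨en i', hen_mem i', ?_⟩
      rw [← heq]; exact hen_mem i
  · -- realized ⊆ edgeSet
    intro e he
    simp only [realizedW, Finset.coe_union, Set.mem_union, Finset.coe_image, Set.mem_image,
      Finset.mem_coe, Finset.mem_univ] at he
    rcases he with ⟨j, -, hj⟩ | ⟨i, -, hi⟩
    · rw [← hj]; exact w.edges_subset_edgeSet (hmemcycE j)
    · rcases hfi : f i with jb | pr
      · rw [← hi]
        show entryEdge c (f i) ∈ G.edgeSet
        rw [hfi]
        rcases jb with ⟨j, b⟩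
        rw [entryEdge_inl]
        exact w.edges_subset_edgeSet (hmemcycE j)
      · have hpr : pr = (en i).toProd := by
          by_cases h : ∃ j : Fin m, (en i).edge = cycE c j
          · simp only [hf, dif_pos h] at hfi; exact absurd hfi Sum.inl_ne_inr
          · simp only [hf, dif_neg h] at hfi; exact (Sum.inr.inj hfi).symm
        rw [← hi]
        show entryEdge c (f i) ∈ G.edgeSet
        rw [hfi]
        have : entryEdge c (Sum.inr pr) = s(pr.1, pr.2) := rfl
        rw [this, hpr]
        exact (en i).edge_mem
  · -- characterization
    intro d
    constructor
    · intro hd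
      obtain ⟨i, hi⟩ := hen_surj d hd
      exact ⟨i, by rw [hdecode i, hi]⟩
    · rintro ⟨i, hi⟩
      rw [hdecode i] at hi
      have : d = en i := SimpleGraph.Dart.ext _ _ hi
      rw [this]; exact hen_mem i




open scoped Classical in
noncomputable def indW {n ℓ m : ℕ} (G : SimpleGraph (Fin n)) (w : WT n ℓ m) : ℝ :=
  if GoodW w ∧ ↑(realizedW w) ⊆ G.edgeSet then 1 else 0

theorem numNonFaces_le {n : ℕ} (hn : 1 ≤ n) (G : SimpleGraph (Fin n))
    (elt : Sym2 (Fin n) → Sym2 (Fin n) → Prop) {ℓ : ℕ} (hl2 : 2 ≤ ℓ) :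
    (numNonFaces G elt ℓ : ℝ) ≤ ∑ m ∈ Finset.Icc 3 (2*ℓ),
      ∑ w : WT n ℓ m, indW G w := by
  classical
  set Q : ((m : ℕ) × WT n ℓ m) → G.Dart → Prop :=
    fun a d => ∃ i, d.toProd = decodePair a.2.1 (a.2.2 i) with hQ
  set P : Set G.Dart → Prop := fun S => ∃ m ∈ Finset.Icc 3 (2*ℓ), ∃ w : WT n ℓ m,
    GoodW w ∧ ↑(realizedW w) ⊆ G.edgeSet ∧
      (∀ d : G.Dart, d ∈ S ↔ ∃ i, d.toProd = decodePair w.1 (w.2 i)) with hP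
  have hwit : ∀ S : Set G.Dart,
      S.ncard = ℓ → (¬ ∃ d ∈ S, d.symm ∈ S) → ¬ IsFace G elt S → P S := by
    intro S h1 h2 h3
    exact exists_witness G elt hl2 S h1 h2 h3
  have hne : Nonempty ((m : ℕ) × WT n ℓ m) :=
    ⟨⟨1, fun _ => ⟨0, hn⟩, fun _ => Sum.inr (⟨0, hn⟩, ⟨0, hn⟩)⟩⟩
  set φ : Set G.Dart → (m : ℕ) × WT n ℓ m := fun S =>
    if h : P S then ⟨h.choose, h.choose_spec.2.choose⟩ else Classical.arbitrary _ with hφ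
  have hφchar : ∀ S, P S → ∀ d : G.Dart, d ∈ S ↔ Q (φ S) d := by
    intro S hp d
    simp only [hφ, dif_pos hp]
    exact hp.choose_spec.2.choose_spec.2.2 d
  set T : Finset ((m : ℕ) × WT n ℓ m) := (Finset.Icc 3 (2*ℓ)).sigma
    (fun m => univ.filter (fun w : WT n ℓ m => GoodW w ∧ ↑(realizedW w) ⊆ G.edgeSet)) with hT
  have hmain : numNonFaces G elt ℓ ≤ T.card := by
    rw [numNonFaces, ← Set.ncard_coe_finset T]
    refine Set.ncard_le_ncard_of_injOn φ ?_ ?_ (Set.toFinite _)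
    · rintro S ⟨h1, h2, h3⟩
      have hp := hwit S h1 h2 h3
      simp only [hφ, dif_pos hp]
      have hm := hp.choose_spec.1
      have hw := hp.choose_spec.2.choose_spec
      simp only [Finset.mem_coe, hT, Finset.mem_sigma, Finset.mem_filter, Finset.mem_univ]
      exact ⟨hm, trivial, hw.1, hw.2.1⟩
    · rintro S ⟨h1, h2, h3⟩ S' ⟨h1', h2', h3'⟩ hSS
      have hp := hwit S h1 h2 h3
      have hp' := hwit S' h1' h2' h3'
      ext d
      rw [hφchar S hp d, hφchar S' hp' d, hSS]
  calc (numNonFaces G elt ℓ : ℝ) ≤ (T.card : ℝ) := by exact_mod_cast hmain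
    _ = _ := by
        rw [hT, Finset.card_sigma]
        push_cast
        refine Finset.sum_congr rfl (fun m _ => ?_)
        have : ∀ w : WT n ℓ m, indW G w =
            if GoodW w ∧ ↑(realizedW w) ⊆ G.edgeSet then (1:ℝ) else 0 := by
          intro w; rw [indW]
        rw [Finset.sum_congr rfl (fun w _ => this w), Finset.sum_ite, Finset.sum_const,
          Finset.sum_const]
        simp



lemma graphWeight_nonneg {n : ℕ} {p : ℝ} (hp0 : 0 ≤ p) (hp1 : p ≤ 1)
    (G : SimpleGraph (Fin n)) : 0 ≤ graphWeight n p G :=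
  mul_nonneg (pow_nonneg hp0 _) (pow_nonneg (by linarith) _)

lemma powersum {ι : Type*} [DecidableEq ι] (s : Finset ι) (p : ℝ) :
    ∑ t ∈ s.powerset, p ^ t.card * (1-p) ^ (s.card - t.card) = 1 := by
  have h := Finset.prod_add (fun _ : ι => p) (fun _ : ι => (1:ℝ) - p) s
  simp only [Finset.prod_const] at h
  have h2 : (p + (1 - p)) ^ s.card = 1 := by norm_num
  rw [h2] at h
  refine Eq.trans (Finset.sum_congr rfl (fun t ht => ?_)) h.symm
  rw [Finset.card_sdiff_of_subset (Finset.mem_powerset.mp ht)]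

lemma sum_graphs {n : ℕ} (f : SimpleGraph (Fin n) → ℝ) :
    ∑ G : SimpleGraph (Fin n), f G =
      ∑ F ∈ ((⊤ : SimpleGraph (Fin n)).edgeFinset).powerset,
        f (SimpleGraph.fromEdgeSet ↑F) := by
  classical
  refine Finset.sum_bij' (fun G _ => G.edgeSet.toFinite.toFinset)
    (fun F _ => SimpleGraph.fromEdgeSet ↑F) ?_ ?_ ?_ ?_ ?_
  · intro G _
    rw [Finset.mem_powerset]
    intro e he
    rw [Set.Finite.mem_toFinset] at he
    rw [SimpleGraph.mem_edgeFinset]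
    exact SimpleGraph.edgeSet_mono le_top he
  · intro F _; exact Finset.mem_univ _
  · intro G _
    rw [Set.Finite.coe_toFinset, SimpleGraph.fromEdgeSet_edgeSet]
  · intro F hF
    rw [Finset.mem_powerset] at hF
    ext e
    rw [Set.Finite.mem_toFinset, SimpleGraph.edgeSet_fromEdgeSet]
    constructor
    · rintro ⟨he, -⟩; exact he
    · intro he
      refine ⟨he, ?_⟩
      have := hF he
      rw [SimpleGraph.mem_edgeFinset] at this
      exact SimpleGraph.not_isDiag_of_mem_edgeSet _ this
  · intro G _
    rw [Set.Finite.coe_toFinset, SimpleGraph.fromEdgeSet_edgeSet]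

lemma ncard_fromEdgeSet {n : ℕ} (F : Finset (Sym2 (Fin n)))
    (hF : F ∈ ((⊤ : SimpleGraph (Fin n)).edgeFinset).powerset) :
    (SimpleGraph.fromEdgeSet (↑F : Set (Sym2 (Fin n)))).edgeSet.ncard = F.card := by
  rw [Finset.mem_powerset] at hF
  have : (SimpleGraph.fromEdgeSet (↑F : Set (Sym2 (Fin n)))).edgeSet = ↑F := by
    rw [SimpleGraph.edgeSet_fromEdgeSet]
    ext e
    constructor
    · rintro ⟨he, -⟩; exact he
    · intro he
      refine ⟨he, ?_⟩
      have := hF he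
      rw [SimpleGraph.mem_edgeFinset] at this
      exact SimpleGraph.not_isDiag_of_mem_edgeSet _ this
  rw [this, Set.ncard_coe_finset]

lemma card_allE {n : ℕ} : ((⊤ : SimpleGraph (Fin n)).edgeFinset).card = n.choose 2 := by
  classical
  rw [SimpleGraph.card_edgeFinset_top_eq_card_choose_two, Fintype.card_fin]

lemma mass {n : ℕ} (p : ℝ) : ∑ G : SimpleGraph (Fin n), graphWeight n p G = 1 := by
  classical
  rw [sum_graphs]
  have hcong : ∀ F ∈ ((⊤ : SimpleGraph (Fin n)).edgeFinset).powerset,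
      graphWeight n p (SimpleGraph.fromEdgeSet ↑F) =
      p ^ F.card * (1-p) ^ (((⊤ : SimpleGraph (Fin n)).edgeFinset).card - F.card) := by
    intro F hF
    rw [graphWeight, ncard_fromEdgeSet F hF, card_allE]
  rw [Finset.sum_congr rfl hcong, powersum]




lemma erProb_nonneg {n : ℕ} {p : ℝ} (hp0 : 0 ≤ p) (hp1 : p ≤ 1) (A : Set (SimpleGraph (Fin n))) :
    0 ≤ erProb n p A := by
  refine Finset.sum_nonneg (fun G _ => ?_)
  exact Set.indicator_nonneg (fun G _ => graphWeight_nonneg hp0 hp1 G) G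

lemma erProb_compl {n : ℕ} (p : ℝ) (A : Set (SimpleGraph (Fin n))) :
    erProb n p A = 1 - erProb n p Aᶜ := by
  classical
  have : erProb n p A + erProb n p Aᶜ = 1 := by
    rw [erProb, erProb, ← Finset.sum_add_distrib]
    rw [← mass (n := n) p]
    refine Finset.sum_congr rfl (fun G _ => ?_)
    by_cases hG : G ∈ A
    · rw [Set.indicator_of_mem hG, Set.indicator_of_notMem (by simpa using hG), add_zero]
    · rw [Set.indicator_of_notMem hG, Set.indicator_of_mem (by simpa using hG), zero_add]
  linarith

lemma erProb_mono {n : ℕ} {p : ℝ} (hp0 : 0 ≤ p) (hp1 : p ≤ 1)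
    {A B : Set (SimpleGraph (Fin n))} (hAB : A ⊆ B) : erProb n p A ≤ erProb n p B := by
  classical
  refine Finset.sum_le_sum (fun G _ => ?_)
  by_cases hG : G ∈ A
  · rw [Set.indicator_of_mem hG, Set.indicator_of_mem (hAB hG)]
  · rw [Set.indicator_of_notMem hG]
    exact Set.indicator_nonneg (fun G _ => graphWeight_nonneg hp0 hp1 G) G

lemma erProb_union_le {n : ℕ} {p : ℝ} (hp0 : 0 ≤ p) (hp1 : p ≤ 1) {ι : Type*}
    (s : Finset ι) (B : ι → Set (SimpleGraph (Fin n))) (A : Set (SimpleGraph (Fin n)))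
    (hA : ∀ G ∈ A, ∃ i ∈ s, G ∈ B i) :
    erProb n p A ≤ ∑ i ∈ s, erProb n p (B i) := by
  classical
  have hpt : ∀ G : SimpleGraph (Fin n), A.indicator (graphWeight n p) G ≤
      ∑ i ∈ s, (B i).indicator (graphWeight n p) G := by
    intro G
    by_cases hG : G ∈ A
    · obtain ⟨i, his, hGB⟩ := hA G hG
      rw [Set.indicator_of_mem hG]
      have : (B i).indicator (graphWeight n p) G = graphWeight n p G :=
        Set.indicator_of_mem hGB _
      refine le_trans (le_of_eq this.symm) ?_
      refine Finset.single_le_sum (f := fun i => (B i).indicator (graphWeight n p) G)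
        (fun j _ => ?_) his
      exact Set.indicator_nonneg (fun G _ => graphWeight_nonneg hp0 hp1 G) G
    · rw [Set.indicator_of_notMem hG]
      refine Finset.sum_nonneg (fun j _ => ?_)
      exact Set.indicator_nonneg (fun G _ => graphWeight_nonneg hp0 hp1 G) G
  calc erProb n p A ≤ ∑ G : SimpleGraph (Fin n), ∑ i ∈ s, (B i).indicator (graphWeight n p) G :=
        Finset.sum_le_sum (fun G _ => hpt G)
    _ = ∑ i ∈ s, erProb n p (B i) := Finset.sum_comm

lemma markov {n : ℕ} {p : ℝ} (hp0 : 0 ≤ p) (hp1 : p ≤ 1) (X : SimpleGraph (Fin n) → ℝ)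
    (hX : ∀ G, 0 ≤ X G) {t : ℝ} (ht : 0 < t) :
    erProb n p {G | t ≤ X G} ≤ erExp n p X / t := by
  classical
  rw [le_div_iff₀ ht, erProb, erExp, Finset.sum_mul]
  refine Finset.sum_le_sum (fun G _ => ?_)
  by_cases hG : G ∈ {G | t ≤ X G}
  · rw [Set.indicator_of_mem hG]
    calc graphWeight n p G * t ≤ graphWeight n p G * X G := by
          exact mul_le_mul_of_nonneg_left hG (graphWeight_nonneg hp0 hp1 G)
      _ = _ := rfl
  · rw [Set.indicator_of_notMem hG, zero_mul]
    have hq : (0:ℝ) ≤ 1 - p := by linarith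
    exact mul_nonneg (graphWeight_nonneg hp0 hp1 G) (hX G)

lemma erExp_mono {n : ℕ} {p : ℝ} (hp0 : 0 ≤ p) (hp1 : p ≤ 1)
    {X Y : SimpleGraph (Fin n) → ℝ} (h : ∀ G, X G ≤ Y G) : erExp n p X ≤ erExp n p Y :=
  Finset.sum_le_sum (fun G _ =>
    mul_le_mul_of_nonneg_left (h G) (graphWeight_nonneg hp0 hp1 G))

/-- Independence upper bound for monotone edge events. -/
lemma erProb_edges_subset {n : ℕ} (p : ℝ) (F₀ : Finset (Sym2 (Fin n)))
    (hd : ∀ e ∈ F₀, ¬ e.IsDiag) :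
    erProb n p {G | ↑F₀ ⊆ G.edgeSet} = p ^ F₀.card := by
  classical
  set allE := ((⊤ : SimpleGraph (Fin n)).edgeFinset) with hallE
  have hF₀ : F₀ ⊆ allE := by
    intro e he
    rw [hallE, SimpleGraph.mem_edgeFinset, SimpleGraph.edgeSet_top]
    exact hd e he
  rw [erProb, sum_graphs]
  have hsummand : ∀ F ∈ allE.powerset,
      ({G | ↑F₀ ⊆ G.edgeSet} : Set (SimpleGraph (Fin n))).indicator (graphWeight n p)
        (SimpleGraph.fromEdgeSet ↑F) =
      if F₀ ⊆ F then p ^ F.card * (1-p) ^ (allE.card - F.card) else 0 := by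
    intro F hF
    have hes : (SimpleGraph.fromEdgeSet (↑F : Set (Sym2 (Fin n)))).edgeSet = ↑F := by
      rw [SimpleGraph.edgeSet_fromEdgeSet]
      ext e
      refine ⟨fun h => h.1, fun he => ⟨he, ?_⟩⟩
      have := Finset.mem_powerset.mp hF he
      rw [SimpleGraph.mem_edgeFinset] at this
      exact SimpleGraph.not_isDiag_of_mem_edgeSet _ this
    by_cases hsub : F₀ ⊆ F
    · rw [Set.indicator_of_mem, if_pos hsub]
      · rw [graphWeight, ncard_fromEdgeSet F hF, card_allE]
      · show (↑F₀ : Set (Sym2 (Fin n))) ⊆ (SimpleGraph.fromEdgeSet (↑F : Set (Sym2 (Fin n)))).edgeSet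
        rw [hes]
        exact Finset.coe_subset.mpr hsub
    · rw [Set.indicator_of_notMem, if_neg hsub]
      show ¬ ((↑F₀ : Set (Sym2 (Fin n))) ⊆ (SimpleGraph.fromEdgeSet (↑F : Set (Sym2 (Fin n)))).edgeSet)
      rw [hes]
      intro hcon
      exact hsub (Finset.coe_subset.mp hcon)
  rw [Finset.sum_congr rfl hsummand, Finset.sum_ite, Finset.sum_const_zero, add_zero]
  -- reindex the filtered sum
  have hre : ∑ F ∈ allE.powerset.filter (fun F => F₀ ⊆ F),
      p ^ F.card * (1-p) ^ (allE.card - F.card) =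
      ∑ t ∈ (allE \ F₀).powerset,
        p ^ F₀.card * (p ^ t.card * (1-p) ^ ((allE \ F₀).card - t.card)) := by
    refine Finset.sum_bij' (fun F _ => F \ F₀) (fun t _ => t ∪ F₀) ?_ ?_ ?_ ?_ ?_
    · intro F hF
      rw [Finset.mem_filter, Finset.mem_powerset] at hF
      rw [Finset.mem_powerset]
      exact Finset.sdiff_subset_sdiff hF.1 (le_refl _)
    · intro t ht
      rw [Finset.mem_powerset] at ht
      rw [Finset.mem_filter, Finset.mem_powerset]
      constructor
      · exact Finset.union_subset (ht.trans (Finset.sdiff_subset)) hF₀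
      · exact Finset.subset_union_right
    · intro F hF
      rw [Finset.mem_filter] at hF
      exact Finset.sdiff_union_of_subset hF.2
    · intro t ht
      rw [Finset.mem_powerset] at ht
      have hdisj : Disjoint t F₀ := by
        refine Finset.disjoint_left.mpr (fun e het heF₀ => ?_)
        have := ht het
        rw [Finset.mem_sdiff] at this
        exact this.2 heF₀
      rw [Finset.union_sdiff_cancel_right hdisj]
    · intro F hF
      rw [Finset.mem_filter, Finset.mem_powerset] at hF
      have hcard : F.card = (F \ F₀).card + F₀.card := by
        rw [Finset.card_sdiff_of_subset hF.2]
        have := Finset.card_le_card hF.2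
        omega
      have hcard2 : allE.card - ((F \ F₀).card + F₀.card) = (allE \ F₀).card - (F \ F₀).card := by
        rw [Finset.card_sdiff_of_subset hF₀, Finset.card_sdiff_of_subset hF.2]
        have h1 := Finset.card_le_card hF.2
        have h2 := Finset.card_le_card hF.1
        have h3 := Finset.card_le_card hF₀
        omega
      rw [hcard, hcard2, pow_add]
      ring
  rw [hre, ← Finset.mul_sum, powersum, mul_one]



open scoped Classical in
lemma sum_indW_le {n ℓ m : ℕ} {β : ℝ} (hβ0 : 0 < β) (hβ1 : β < 1) (hn : 1 ≤ n) :
    ∑ w : WT n ℓ m, (if GoodW w then ((n:ℝ) ^ (-β)) ^ (m + (ℓ - tL w)) else 0)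
      ≤ (2*(m:ℝ)+1)^ℓ * (n:ℝ) ^ ((2-β)*ℓ - (1+β/2)*m + m) := by
  classical
  set N : ℝ := (n:ℝ) with hN
  have hN1 : (1:ℝ) ≤ N := by rw [hN]; exact_mod_cast hn
  have hN0 : (0:ℝ) < N := lt_of_lt_of_le one_pos hN1
  set u : ((Fin m × Bool) ⊕ (Fin n × Fin n)) → ℝ :=
    fun a => if a.isLeft then N ^ ((2:ℝ)-β) else N ^ (-β) with hu
  have hu_nonneg : ∀ a, 0 ≤ u a := by
    intro a
    rcases a with a | a
    · have : u (Sum.inl a) = N ^ ((2:ℝ)-β) := by rw [hu]; rfl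
      rw [this]; positivity
    · have : u (Sum.inr a) = N ^ (-β) := by rw [hu]; rfl
      rw [this]; positivity
  -- pointwise bound
  have hpt : ∀ w : WT n ℓ m, (if GoodW w then ((n:ℝ) ^ (-β)) ^ (m + (ℓ - tL w)) else 0)
      ≤ N ^ ((-1-β/2)*m) * ∏ i : Fin ℓ, u (w.2 i) := by
    intro w
    have hRHS0 : 0 ≤ N ^ ((-1-β/2)*m) * ∏ i : Fin ℓ, u (w.2 i) := by
      apply mul_nonneg (Real.rpow_nonneg hN0.le _)
      exact Finset.prod_nonneg (fun i _ => hu_nonneg _)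
    by_cases hg : GoodW w
    · rw [if_pos hg]
      have hprod : ∏ i : Fin ℓ, u (w.2 i)
          = (N ^ ((2:ℝ)-β)) ^ (tL w) * (N ^ (-β)) ^ (ℓ - tL w) := by
        rw [hu]
        rw [Finset.prod_ite (f := fun _ => N ^ ((2:ℝ)-β)) (g := fun _ => N ^ (-β))]
        rw [Finset.prod_const, Finset.prod_const]
        have h1 : #(univ.filter fun i : Fin ℓ => (w.2 i).isLeft) = tL w := rfl
        have h2 : #(univ.filter fun i : Fin ℓ => ¬ ((w.2 i).isLeft = true)) = ℓ - tL w := by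
          have h0 := Finset.card_filter_add_card_filter_not (s := univ)
            (p := fun i : Fin ℓ => (w.2 i).isLeft)
          simp only [Finset.card_univ, Fintype.card_fin] at h0
          have h3 : tL w = #(univ.filter fun i : Fin ℓ => (w.2 i).isLeft) := rfl
          omega
        rw [h1, h2]
      rw [hprod]
      have e1 : ((n:ℝ) ^ (-β)) ^ (m + (ℓ - tL w)) = N ^ ((-β) * (m + (ℓ - tL w) : ℕ)) := by
        rw [← Real.rpow_natCast (N ^ (-β)) _, ← Real.rpow_mul hN0.le]
      have e2 : (N ^ ((2:ℝ)-β)) ^ (tL w) = N ^ (((2:ℝ)-β) * (tL w : ℕ)) := by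
        rw [← Real.rpow_natCast (N ^ ((2:ℝ)-β)) _, ← Real.rpow_mul hN0.le]
      have e3 : (N ^ (-β)) ^ (ℓ - tL w) = N ^ ((-β) * ((ℓ - tL w : ℕ) : ℝ)) := by
        rw [← Real.rpow_natCast (N ^ (-β)) _, ← Real.rpow_mul hN0.le]
      rw [e1, e2, e3, ← Real.rpow_add hN0, ← Real.rpow_add hN0]
      apply Real.rpow_le_rpow_of_exponent_le hN1
      push_cast
      have hmt : (m:ℝ) ≤ 2 * (tL w : ℝ) := by exact_mod_cast hg.2.1
      have h2β : (0:ℝ) < 2 - β := by linarith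
      nlinarith [mul_le_mul_of_nonneg_left hmt h2β.le]
    · rw [if_neg hg]; exact hRHS0
  refine le_trans (Finset.sum_le_sum (fun w _ => hpt w)) ?_
  rw [← Finset.mul_sum]
  -- compute the sum of products
  have hsum_a : ∑ a : ((Fin m × Bool) ⊕ (Fin n × Fin n)), u a = (2*(m:ℝ)+1) * N ^ ((2:ℝ)-β) := by
    rw [Fintype.sum_sum_type]
    have h1 : ∀ a : Fin m × Bool, u (Sum.inl a) = N ^ ((2:ℝ)-β) := fun a => by rw [hu]; rfl
    have h2 : ∀ b : Fin n × Fin n, u (Sum.inr b) = N ^ (-β) := fun b => by rw [hu]; rfl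
    rw [Finset.sum_congr rfl (fun a _ => h1 a), Finset.sum_congr rfl (fun b _ => h2 b)]
    rw [Finset.sum_const, Finset.sum_const]
    simp only [Finset.card_univ, Fintype.card_prod, Fintype.card_fin, Fintype.card_bool,
      nsmul_eq_mul]
    have : (n:ℝ) * (n:ℝ) * N ^ (-β) = N ^ ((2:ℝ) - β) := by
      rw [hN, show ((2:ℝ) - β) = 1 + 1 + (-β) by ring]
      rw [Real.rpow_add hN0, Real.rpow_add hN0, Real.rpow_one]
    push_cast
    rw [this]
    ring
  have hsum_w : ∑ w : WT n ℓ m, ∏ i : Fin ℓ, u (w.2 i)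
      = (n:ℝ)^m * ((2*(m:ℝ)+1) * N ^ ((2:ℝ)-β))^ℓ := by
    rw [Fintype.sum_prod_type]
    rw [Finset.sum_congr rfl (fun c _ => rfl)]
    have hinner : ∀ c : Fin m → Fin n, ∑ f : Fin ℓ → ((Fin m × Bool) ⊕ (Fin n × Fin n)),
        ∏ i : Fin ℓ, u (f i) = ((2*(m:ℝ)+1) * N ^ ((2:ℝ)-β))^ℓ := by
      intro c
      have h := Finset.prod_univ_sum
        (fun _ : Fin ℓ => (univ : Finset ((Fin m × Bool) ⊕ (Fin n × Fin n)))) (fun _ a => u a)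
      rw [Fintype.piFinset_univ] at h
      rw [← h, Finset.prod_const, Finset.card_univ, Fintype.card_fin, hsum_a]
    rw [Finset.sum_congr rfl (fun c _ => hinner c), Finset.sum_const]
    simp only [Finset.card_univ, Fintype.card_fun, Fintype.card_fin, nsmul_eq_mul]
    push_cast
    ring
  rw [hsum_w]
  -- final form
  have hA : (N ^ ((2:ℝ)-β))^ℓ = N ^ (((2:ℝ)-β) * (ℓ:ℝ)) := by
    rw [← Real.rpow_natCast (N ^ ((2:ℝ)-β)) ℓ, ← Real.rpow_mul hN0.le]
  have hB : ((n:ℝ):ℝ)^m = N ^ ((m:ℕ):ℝ) := by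
    rw [Real.rpow_natCast]
  have hE : N ^ ((2-β)*ℓ - (1+β/2)*m + m)
      = N ^ ((-1-β/2)*(m:ℝ)) * (N ^ ((m:ℕ):ℝ) * N ^ (((2:ℝ)-β)*(ℓ:ℝ))) := by
    rw [← Real.rpow_add hN0, ← Real.rpow_add hN0]
    congr 1
    push_cast
    ring
  have hfin : N ^ ((-1-β/2)*m) * ((n:ℝ)^m * ((2*(m:ℝ)+1) * N ^ ((2:ℝ)-β))^ℓ)
      = (2*(m:ℝ)+1)^ℓ * N ^ ((2-β)*ℓ - (1+β/2)*m + m) := by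
    rw [mul_pow, hA, hB, hE]
    ring
  exact le_of_eq hfin



lemma realizedW_nondiag {n ℓ m : ℕ} (w : WT n ℓ m) (hw : GoodW w) :
    ∀ e ∈ realizedW w, ¬ e.IsDiag := by
  intro e he
  rw [realizedW, Finset.mem_union] at he
  rcases he with he | he
  · rw [Finset.mem_image] at he
    obtain ⟨j, -, hj⟩ := he
    rw [← hj, cycE]
    rw [Sym2.mk_isDiag_iff]
    exact hw.2.2.1 j
  · rw [Finset.mem_image] at he
    obtain ⟨i, -, hi⟩ := he
    rcases hfi : w.2 i with jb | pr
    · rw [← hi, hfi]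
      rcases jb with ⟨j, b⟩
      rw [entryEdge_inl, cycE, Sym2.mk_isDiag_iff]
      exact hw.2.2.1 j
    · rw [← hi, hfi]
      have : entryEdge w.1 (Sum.inr pr) = s(pr.1, pr.2) := rfl
      rw [this, Sym2.mk_isDiag_iff]
      exact (hw.2.2.2.1 i pr hfi).1

lemma erExp_sum {n : ℕ} (p : ℝ) {ι : Type*} (s : Finset ι)
    (f : ι → SimpleGraph (Fin n) → ℝ) :
    erExp n p (fun G => ∑ i ∈ s, f i G) = ∑ i ∈ s, erExp n p (f i) := by
  rw [erExp]
  simp_rw [Finset.mul_sum]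
  rw [Finset.sum_comm]
  rfl

open scoped Classical in
lemma erExp_indW_le {n ℓ m : ℕ} {p : ℝ} (hp0 : 0 ≤ p) (hp1 : p ≤ 1) (w : WT n ℓ m) :
    erExp n p (fun G => indW G w) ≤ if GoodW w then p ^ (m + (ℓ - tL w)) else 0 := by
  by_cases hg : GoodW w
  · rw [if_pos hg]
    have hind : ∀ G : SimpleGraph (Fin n), indW G w =
        if (↑(realizedW w) : Set (Sym2 (Fin n))) ⊆ G.edgeSet then 1 else 0 := by
      intro G
      rw [indW]
      by_cases hs : (↑(realizedW w) : Set (Sym2 (Fin n))) ⊆ G.edgeSet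
      · rw [if_pos ⟨hg, hs⟩, if_pos hs]
      · rw [if_neg (fun hc => hs hc.2), if_neg hs]
    have herexp : erExp n p (fun G => indW G w) =
        erProb n p {G | (↑(realizedW w) : Set (Sym2 (Fin n))) ⊆ G.edgeSet} := by
      rw [erExp, erProb]
      refine Finset.sum_congr rfl (fun G _ => ?_)
      rw [hind G]
      by_cases hs : (↑(realizedW w) : Set (Sym2 (Fin n))) ⊆ G.edgeSet
      · rw [if_pos hs, mul_one, Set.indicator_of_mem
          (show G ∈ {G : SimpleGraph (Fin n) |
            (↑(realizedW w) : Set (Sym2 (Fin n))) ⊆ G.edgeSet} from hs) (graphWeight n p)]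
      · rw [if_neg hs, mul_zero, Set.indicator_of_notMem
          (show G ∉ {G : SimpleGraph (Fin n) |
            (↑(realizedW w) : Set (Sym2 (Fin n))) ⊆ G.edgeSet} from hs) (graphWeight n p)]
    rw [herexp, erProb_edges_subset p (realizedW w) (realizedW_nondiag w hg)]
    exact pow_le_pow_of_le_one hp0 hp1 (realizedW_card w hg)
  · have hind : ∀ G : SimpleGraph (Fin n), indW G w = 0 := by
      intro G
      rw [indW, if_neg (fun hc => hg hc.1)]
    rw [if_neg hg, erExp]
    simp [hind]

theorem erExp_numNonFaces_le {n : ℕ} {β : ℝ} (hβ0 : 0 < β) (hβ1 : β < 1) (hn : 1 ≤ n)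
    (elt : Sym2 (Fin n) → Sym2 (Fin n) → Prop) {ℓ : ℕ} (hl2 : 2 ≤ ℓ) :
    erExp n ((n:ℝ)^(-β)) (fun G => (numNonFaces G elt ℓ : ℝ))
      ≤ ∑ m ∈ Finset.Icc 3 (2*ℓ), (2*(m:ℝ)+1)^ℓ * (n:ℝ) ^ ((2-β)*ℓ - (1+β/2)*m + m) := by
  classical
  set p : ℝ := (n:ℝ)^(-β) with hp
  have hn1 : (1:ℝ) ≤ (n:ℝ) := by exact_mod_cast hn
  have hp0 : 0 ≤ p := Real.rpow_nonneg (by linarith) _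
  have hp1 : p ≤ 1 := Real.rpow_le_one_of_one_le_of_nonpos hn1 (by linarith)
  have h1 : erExp n p (fun G => (numNonFaces G elt ℓ : ℝ)) ≤
      erExp n p (fun G => ∑ m ∈ Finset.Icc 3 (2*ℓ), ∑ w : WT n ℓ m, indW G w) :=
    erExp_mono hp0 hp1 (fun G => numNonFaces_le hn G elt hl2)
  refine h1.trans ?_
  rw [erExp_sum]
  refine Finset.sum_le_sum (fun m hm => ?_)
  rw [erExp_sum]
  refine le_trans (Finset.sum_le_sum (fun w _ => erExp_indW_le hp0 hp1 w)) ?_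
  exact sum_indW_le hβ0 hβ1 hn



set_option maxHeartbeats 1600000 in
theorem prob_badset_le {n : ℕ} {β B : ℝ} (hβ0 : 0 < β) (hβ1 : β < 1) (hn : 4 ≤ n)
    (hB : 1 ≤ B) (elt : Sym2 (Fin n) → Sym2 (Fin n) → Prop) {ℓ : ℕ} (hl2 : 2 ≤ ℓ) :
    erProb n ((n:ℝ)^(-β)) {G | B * (expEdges n ((n:ℝ)^(-β))) ^ ((ℓ:ℝ) - min (1/2) (β/(2-β)))
        < (numNonFaces G elt ℓ : ℝ)}
      ≤ (2*(ℓ:ℝ)) * (4*(ℓ:ℝ)+1)^ℓ * 4^ℓ * (n:ℝ) ^ (-β/2) := by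
  classical
  set α : ℝ := min (1/2) (β/(2-β)) with hα
  set p : ℝ := (n:ℝ)^(-β) with hp
  have hn1 : (1:ℝ) ≤ (n:ℝ) := by
    have : (4:ℝ) ≤ (n:ℝ) := by exact_mod_cast hn
    linarith
  have hn4 : (4:ℝ) ≤ (n:ℝ) := by exact_mod_cast hn
  have hNpos : (0:ℝ) < (n:ℝ) := by linarith
  have hp0 : 0 ≤ p := Real.rpow_nonneg hNpos.le _
  have hppos : 0 < p := Real.rpow_pos_of_pos hNpos _
  have hp1 : p ≤ 1 := Real.rpow_le_one_of_one_le_of_nonpos hn1 (by linarith)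
  have h2β : (0:ℝ) < 2 - β := by linarith
  have hα0 : 0 < α := lt_min (by norm_num) (div_pos hβ0 h2β)
  have hαh : α ≤ 1/2 := min_le_left _ _
  have hαβ : (2-β)*α ≤ β := by
    have h1 : α ≤ β/(2-β) := min_le_right _ _
    calc (2-β)*α ≤ (2-β)*(β/(2-β)) := by nlinarith
      _ = β := by field_simp
  set e : ℝ := (ℓ:ℝ) - α with he
  have hl2' : (2:ℝ) ≤ (ℓ:ℝ) := by exact_mod_cast hl2
  have he0 : 0 ≤ e := by rw [he]; linarith
  set T : ℝ := (expEdges n p) ^ e with hT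
  have hEEpos : 0 < expEdges n p := by
    rw [expEdges]
    have : 0 < n.choose 2 := Nat.choose_pos (by omega)
    have : (0:ℝ) < (n.choose 2 : ℝ) := by exact_mod_cast this
    exact mul_pos this hppos
  have hTpos : 0 < T := Real.rpow_pos_of_pos hEEpos _
  have hBTpos : 0 < B * T := mul_pos (by linarith) hTpos
  -- Markov step
  have step1 : erProb n p {G | B * T < (numNonFaces G elt ℓ : ℝ)}
      ≤ erProb n p {G | B * T ≤ (numNonFaces G elt ℓ : ℝ)} :=
    erProb_mono hp0 hp1 (fun G hG => le_of_lt (a := B * T) hG)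
  have step2 : erProb n p {G | B * T ≤ (numNonFaces G elt ℓ : ℝ)}
      ≤ erExp n p (fun G => (numNonFaces G elt ℓ : ℝ)) / (B * T) :=
    markov hp0 hp1 _ (fun G => Nat.cast_nonneg _) hBTpos
  -- expectation bound
  have hE1 : erExp n p (fun G => (numNonFaces G elt ℓ : ℝ))
      ≤ (2*(ℓ:ℝ)) * (4*(ℓ:ℝ)+1)^ℓ * (n:ℝ) ^ ((2-β)*ℓ - 3*β/2) := by
    refine le_trans (erExp_numNonFaces_le hβ0 hβ1 (by omega) elt hl2) ?_
    have hterm : ∀ m ∈ Finset.Icc 3 (2*ℓ),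
        (2*(m:ℝ)+1)^ℓ * (n:ℝ) ^ ((2-β)*ℓ - (1+β/2)*m + m)
          ≤ (4*(ℓ:ℝ)+1)^ℓ * (n:ℝ) ^ ((2-β)*ℓ - 3*β/2) := by
      intro m hm
      rw [Finset.mem_Icc] at hm
      have hm3 : (3:ℝ) ≤ (m:ℝ) := by exact_mod_cast hm.1
      have hm2l : (m:ℝ) ≤ 2*(ℓ:ℝ) := by exact_mod_cast hm.2
      refine mul_le_mul ?_ ?_ (Real.rpow_nonneg hNpos.le _) (by positivity)
      · refine pow_le_pow_left₀ (by linarith) (by linarith) ℓ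
      · refine Real.rpow_le_rpow_of_exponent_le hn1 ?_
        nlinarith
    refine le_trans (Finset.sum_le_sum hterm) ?_
    rw [Finset.sum_const]
    rw [nsmul_eq_mul]
    have hcard : (#(Finset.Icc 3 (2*ℓ)) : ℝ) ≤ 2*(ℓ:ℝ) := by
      rw [Nat.card_Icc]
      have : 2*ℓ + 1 - 3 ≤ 2*ℓ := by omega
      exact_mod_cast le_trans (Nat.cast_le.mpr this) (le_refl _)
    have hpos : (0:ℝ) ≤ (4*(ℓ:ℝ)+1)^ℓ * (n:ℝ) ^ ((2-β)*ℓ - 3*β/2) := by positivity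
    refine le_trans (mul_le_mul_of_nonneg_right hcard hpos) (le_of_eq (by ring))
  -- lower bound on T
  set T₀ : ℝ := (n:ℝ) ^ ((2-β)*e) / 4^ℓ with hT₀
  have hT₀pos : 0 < T₀ := by rw [hT₀]; positivity
  have hTT₀ : T₀ ≤ T := by
    have hEE : (n:ℝ)^((2:ℝ)-β)/4 ≤ expEdges n p := by
      rw [expEdges]
      have hch : (n.choose 2 : ℝ) = (n:ℝ) * ((n:ℝ) - 1) / 2 := by
        rw [Nat.cast_choose_two]
      have hq : (n:ℝ)^((2:ℝ)-β) = (n:ℝ) * (n:ℝ) * p := by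
        rw [hp, show ((2:ℝ)-β) = 1 + 1 + (-β) by ring,
          Real.rpow_add hNpos, Real.rpow_add hNpos, Real.rpow_one]
      rw [hch, hq]
      have h1 : (n:ℝ) * (n:ℝ) / 4 ≤ (n:ℝ) * ((n:ℝ)-1) / 2 := by nlinarith
      calc (n:ℝ) * (n:ℝ) * p / 4 = ((n:ℝ) * (n:ℝ) / 4) * p := by ring
        _ ≤ ((n:ℝ) * ((n:ℝ)-1) / 2) * p := by nlinarith
    have h2 : ((n:ℝ)^((2:ℝ)-β)/4) ^ e ≤ T := by
      rw [hT]
      exact Real.rpow_le_rpow (by positivity) hEE he0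
    refine le_trans ?_ h2
    have hnum : ((n:ℝ)^((2:ℝ)-β)) ^ e = (n:ℝ) ^ ((2-β)*e) := by
      rw [← Real.rpow_mul hNpos.le]
    rw [Real.div_rpow (by positivity) (by norm_num), hT₀, hnum]
    refine div_le_div_of_nonneg_left (by positivity) (by positivity) ?_
    calc (4:ℝ) ^ e ≤ (4:ℝ) ^ ((ℓ:ℕ):ℝ) :=
          Real.rpow_le_rpow_of_exponent_le (by norm_num) (by rw [he]; linarith)
      _ = 4 ^ ℓ := Real.rpow_natCast 4 ℓ
  -- combine
  refine le_trans step1 (le_trans step2 ?_)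
  rw [div_le_iff₀ hBTpos]
  have hRHS0 : (0:ℝ) ≤ (2*(ℓ:ℝ)) * (4*(ℓ:ℝ)+1)^ℓ * 4^ℓ * (n:ℝ) ^ (-β/2) := by positivity
  have hkey : (2*(ℓ:ℝ)) * (4*(ℓ:ℝ)+1)^ℓ * (n:ℝ) ^ ((2-β)*ℓ - 3*β/2)
      ≤ ((2*(ℓ:ℝ)) * (4*(ℓ:ℝ)+1)^ℓ * 4^ℓ * (n:ℝ) ^ (-β/2)) * T₀ := by
    rw [hT₀]
    have hexp : (n:ℝ) ^ ((2-β)*ℓ - 3*β/2) ≤ (n:ℝ) ^ (-β/2) * (n:ℝ) ^ ((2-β)*e) := by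
      rw [← Real.rpow_add hNpos]
      refine Real.rpow_le_rpow_of_exponent_le hn1 ?_
      rw [he]
      nlinarith
    calc (2*(ℓ:ℝ)) * (4*(ℓ:ℝ)+1)^ℓ * (n:ℝ) ^ ((2-β)*ℓ - 3*β/2)
        ≤ (2*(ℓ:ℝ)) * (4*(ℓ:ℝ)+1)^ℓ * ((n:ℝ) ^ (-β/2) * (n:ℝ) ^ ((2-β)*e)) := by
          have h0 : (0:ℝ) ≤ (2*(ℓ:ℝ)) * (4*(ℓ:ℝ)+1)^ℓ := by positivity
          exact mul_le_mul_of_nonneg_left hexp h0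
      _ = ((2*(ℓ:ℝ)) * (4*(ℓ:ℝ)+1)^ℓ * 4^ℓ * (n:ℝ) ^ (-β/2)) * ((n:ℝ) ^ ((2-β)*e) / 4^ℓ) := by
          field_simp
  calc erExp n p (fun G => (numNonFaces G elt ℓ : ℝ))
      ≤ (2*(ℓ:ℝ)) * (4*(ℓ:ℝ)+1)^ℓ * (n:ℝ) ^ ((2-β)*ℓ - 3*β/2) := hE1
    _ ≤ ((2*(ℓ:ℝ)) * (4*(ℓ:ℝ)+1)^ℓ * 4^ℓ * (n:ℝ) ^ (-β/2)) * T₀ := hkey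
    _ ≤ ((2*(ℓ:ℝ)) * (4*(ℓ:ℝ)+1)^ℓ * 4^ℓ * (n:ℝ) ^ (-β/2)) * (B * T) := by
        refine mul_le_mul_of_nonneg_left ?_ hRHS0
        calc T₀ ≤ T := hTT₀
          _ = 1 * T := (one_mul T).symm
          _ ≤ B * T := mul_le_mul_of_nonneg_right hB hTpos.le


open Filter in

theorem final_main (β : ℝ) (hβ0 : 0 < β) (hβ1 : β < 1) (k : ℕ) (hk : 1 ≤ k)
    (elt : ∀ n : ℕ, Sym2 (Fin n) → Sym2 (Fin n) → Prop) :
    ∃ B₀ > (0 : ℝ), ∀ B ≥ B₀,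
      Tendsto (fun n => erProb n ((n : ℝ) ^ (-β))
          {G | ∀ ℓ, 2 ≤ ℓ → ℓ ≤ k + 1 →
            (numNonFaces G (elt n) ℓ : ℝ) ≤
              B * (expEdges n ((n : ℝ) ^ (-β))) ^ ((ℓ : ℝ) - min (1 / 2) (β / (2 - β)))})
        atTop (nhds 1) := by
  classical
  refine ⟨1, one_pos, fun B hB => ?_⟩
  set D : ℝ := ∑ ℓ ∈ Finset.Icc 2 (k+1), (2*(ℓ:ℝ)) * (4*(ℓ:ℝ)+1)^ℓ * 4^ℓ with hD
  set Aev : (n : ℕ) → Set (SimpleGraph (Fin n)) := fun n =>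
    {G | ∀ ℓ, 2 ≤ ℓ → ℓ ≤ k + 1 →
      (numNonFaces G (elt n) ℓ : ℝ) ≤
        B * (expEdges n ((n : ℝ) ^ (-β))) ^ ((ℓ : ℝ) - min (1 / 2) (β / (2 - β)))} with hAev
  have hbound : ∀ n : ℕ, 4 ≤ n →
      1 - D * (n:ℝ)^(-β/2) ≤ erProb n ((n:ℝ)^(-β)) (Aev n) ∧
        erProb n ((n:ℝ)^(-β)) (Aev n) ≤ 1 := by
    intro n hn
    have hn1 : (1:ℝ) ≤ (n:ℝ) := by
      have : (4:ℝ) ≤ (n:ℝ) := by exact_mod_cast hn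
      linarith
    have hp0 : (0:ℝ) ≤ (n:ℝ)^(-β) := Real.rpow_nonneg (by linarith) _
    have hp1 : (n:ℝ)^(-β) ≤ 1 := Real.rpow_le_one_of_one_le_of_nonpos hn1 (by linarith)
    have hcompl := erProb_compl ((n:ℝ)^(-β)) (Aev n)
    have hc_le : erProb n ((n:ℝ)^(-β)) (Aev n)ᶜ ≤ D * (n:ℝ)^(-β/2) := by
      have hsub : ∀ G ∈ (Aev n)ᶜ, ∃ ℓ ∈ Finset.Icc 2 (k+1),
          G ∈ {G : SimpleGraph (Fin n) |
            B * (expEdges n ((n:ℝ)^(-β))) ^ ((ℓ:ℝ) - min (1/2) (β/(2-β)))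
              < (numNonFaces G (elt n) ℓ : ℝ)} := by
        intro G hG
        rw [hAev] at hG
        simp only [Set.mem_compl_iff, Set.mem_setOf_eq, not_forall] at hG
        obtain ⟨ℓ, h2, hk1, hlt⟩ := hG
        exact ⟨ℓ, Finset.mem_Icc.mpr ⟨h2, hk1⟩, by
          simp only [Set.mem_setOf_eq]
          exact lt_of_not_ge hlt⟩
      refine le_trans (erProb_union_le hp0 hp1 (Finset.Icc 2 (k+1)) _ _ hsub) ?_
      rw [hD, Finset.sum_mul]
      refine Finset.sum_le_sum (fun ℓ hℓ => ?_)
      exact prob_badset_le hβ0 hβ1 hn hB (elt n) (Finset.mem_Icc.mp hℓ).1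
    constructor
    · rw [hcompl]
      linarith
    · rw [hcompl]
      have := erProb_nonneg hp0 hp1 (Aev n)ᶜ
      linarith
  have hlim0 : Tendsto (fun n : ℕ => (n:ℝ)^(-β/2)) atTop (nhds 0) := by
    have h1 : Tendsto (fun x : ℝ => x ^ (-(β/2))) atTop (nhds 0) :=
      tendsto_rpow_neg_atTop (by linarith)
    have h2 := h1.comp tendsto_natCast_atTop_atTop (α := ℕ)
    refine h2.congr (fun n => ?_)
    simp only [Function.comp_apply, neg_div]
  have hlim1 : Tendsto (fun n : ℕ => 1 - D * (n:ℝ)^(-β/2)) atTop (nhds 1) := by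
    have := (hlim0.const_mul D).const_sub 1
    simpa using this
  refine tendsto_of_tendsto_of_tendsto_of_le_of_le' hlim1 tendsto_const_nhds ?_ ?_
  · filter_upwards [eventually_ge_atTop 4] with n hn
    exact (hbound n hn).1
  · filter_upwards [eventually_ge_atTop 4] with n hn
    exact (hbound n hn).2

open Filter in
theorem stmt15 (β : ℝ) (hβ0 : 0 < β) (hβ1 : β < 1) (k : ℕ) (hk : 1 ≤ k)
    (elt : ∀ n : ℕ, Sym2 (Fin n) → Sym2 (Fin n) → Prop)
    (hord : ∀ n, IsStrictTotalOrder (Sym2 (Fin n)) (elt n)) :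
    ∃ B₀ > (0 : ℝ), ∀ B ≥ B₀,
      Tendsto (fun n => erProb n ((n : ℝ) ^ (-β))
          {G | ∀ ℓ, 2 ≤ ℓ → ℓ ≤ k + 1 →
            (numNonFaces G (elt n) ℓ : ℝ) ≤
              B * (expEdges n ((n : ℝ) ^ (-β))) ^ ((ℓ : ℝ) - min (1 / 2) (β / (2 - β)))})
        atTop (nhds 1) := by
  exact final_main β hβ0 hβ1 k hk elt

end SEP
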